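/- arXiv:1001.2050 — 5 statements merged into one kernel-verified Lean document; each statement's English description precedes it below -/
import Mathlib

section
/- Let D ⊆ ℝᵈ be a nonempty set, f : ℝᵈ → ℝ, h : ℝᵈ → ℝᵐ, and ε ≥ 0. For a perturbation level s ≥ 0 define the feasible set P(s) = {x ∈ D : h(x)ᵢ + s ≤ 0 for all i} and the optimal value v(s) = inf {f(x) : x ∈ P(s)}, and say λ ∈ ℝᵐ with λ ⪰ 0 is a Lagrange multiplier at level s if v(s) = inf_{x ∈ D} ( f(x) + Σᵢ λᵢ (h(x)ᵢ + s) ). Assume P(ε) is nonempty, v(0) and v(ε) are real numbers, and λ₀, λ_ε are Lagrange multipliers at levels 0 and ε respectively. Then |v(0) − v(ε)| ≤ ε · max(‖λ₀‖₁, ‖λ_ε‖₁), where ‖·‖₁ denotes the ℓ¹ norm. -/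
open Finset

/-!
Shrinking the feasible set can only raise the infimum, so `v(0) ≤ v(ε)`. Conversely, every
point `x` feasible at level `0` satisfies `v(ε) ≤ f x + ∑ λ_ε i (h x i + ε) ≤ f x + ε ‖λ_ε‖₁`
(weak duality at level `ε`), so `v(ε) - ε ‖λ_ε‖₁` is a lower bound for the problem at level `0`.
-/

theorem setOf_forall_add_nonpos_anti {α ι : Type*} (D : Set α) (h : α → ι → ℝ) {s t : ℝ}
    (hst : s ≤ t) :
    {x ∈ D | ∀ i, h x i + t ≤ 0} ⊆ {x ∈ D | ∀ i, h x i + s ≤ 0} :=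
  fun _ ⟨hxD, hx⟩ => ⟨hxD, fun i => by linarith [hx i]⟩

theorem sum_mul_add_le_mul_sum_abs {ι : Type*} [Fintype ι] (lam y : ι → ℝ)
    (hlam : ∀ i, 0 ≤ lam i) (hy : ∀ i, y i ≤ 0) (ε : ℝ) :
    ∑ i, lam i * (y i + ε) ≤ ε * ∑ i, |lam i| := by
  rw [mul_sum]
  refine sum_le_sum fun i _ => ?_
  rw [abs_of_nonneg (hlam i), mul_comm ε]
  exact mul_le_mul_of_nonneg_left (by linarith [hy i]) (hlam i)

theorem le_add_of_mem_lowerBounds_image_of_isGLB {α β : Type*} [AddCommGroup β] [PartialOrder β]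
    [IsOrderedAddMonoid β] {f g : α → β} {A D : Set α} {a b c : β}
    (ha : a ∈ lowerBounds (g '' D)) (hb : IsGLB (f '' A) b) (hAD : A ⊆ D)
    (hgf : ∀ x ∈ A, g x ≤ f x + c) : a ≤ b + c := by
  have hlower : a - c ∈ lowerBounds (f '' A) := by
    rintro _ ⟨x, hx, rfl⟩
    exact sub_le_iff_le_add.2 ((ha ⟨x, hAD hx, rfl⟩).trans (hgf x hx))
  exact sub_le_iff_le_add.1 (hb.2 hlower)

theorem sensitivity_lemma_general
    {d m : ℕ} (D : Set (Fin d → ℝ))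
    (f : (Fin d → ℝ) → ℝ) (h : (Fin d → ℝ) → Fin m → ℝ)
    (ε : ℝ) (hε : 0 ≤ ε)
    (P : ℝ → Set (Fin d → ℝ))
    (hP : ∀ s, P s = {x ∈ D | ∀ i, h x i + s ≤ 0})
    (v0 vε : ℝ)
    (hv0 : IsGLB (f '' P 0) v0) (hvε : IsGLB (f '' P ε) vε)
    (lam0 lamε : Fin m → ℝ)
    (hlamε : ∀ i, 0 ≤ lamε i)
    (hlagε : IsGLB ((fun x => f x + ∑ i, lamε i * (h x i + ε)) '' D) vε) :
    |v0 - vε| ≤ ε * max (∑ i, |lam0 i|) (∑ i, |lamε i|) := by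
  have hsub : P ε ⊆ P 0 := by
    rw [hP, hP]
    exact setOf_forall_add_nonpos_anti D h hε
  have hmono : v0 ≤ vε := hvε.mono hv0 (Set.image_mono hsub)
  have hdual : vε ≤ v0 + ε * ∑ i, |lamε i| := by
    refine le_add_of_mem_lowerBounds_image_of_isGLB hlagε.1 hv0 (fun x hx => ?_) fun x hx => ?_
    · rw [hP] at hx
      exact hx.1
    · rw [hP] at hx
      have hfeas : ∀ i, h x i ≤ 0 := fun i => by simpa using hx.2 i
      exact add_le_add_right (sum_mul_add_le_mul_sum_abs lamε (h x) hlamε hfeas ε) _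
  rw [abs_sub_comm, abs_of_nonneg (sub_nonneg.2 hmono)]
  calc vε - v0 ≤ ε * ∑ i, |lamε i| := by linarith
    _ ≤ ε * max (∑ i, |lam0 i|) (∑ i, |lamε i|) := by gcongr; exact le_max_right _ _

/-- Lemma 1 of the paper (sensitivity lemma): tightening the inequality constraints
`h(x) ⪯ 0` to `h(x) + ε·1 ⪯ 0` changes the optimal value by at most `ε` times the
`ℓ¹` norm of a Lagrange multiplier. -/
theorem sensitivity_lemma
    {d m : ℕ} (D : Set (Fin d → ℝ)) (hD : D.Nonempty)
    (f : (Fin d → ℝ) → ℝ) (h : (Fin d → ℝ) → Fin m → ℝ)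
    (ε : ℝ) (hε : 0 ≤ ε)
    (P : ℝ → Set (Fin d → ℝ))
    (hP : ∀ s, P s = {x ∈ D | ∀ i, h x i + s ≤ 0})
    (hPε : (P ε).Nonempty)
    (v0 vε : ℝ)
    (hv0 : IsGLB (f '' P 0) v0) (hvε : IsGLB (f '' P ε) vε)
    (lam0 lamε : Fin m → ℝ)
    (hlam0 : ∀ i, 0 ≤ lam0 i) (hlamε : ∀ i, 0 ≤ lamε i)
    (hlag0 : IsGLB ((fun x => f x + ∑ i, lam0 i * (h x i + 0)) '' D) v0)
    (hlagε : IsGLB ((fun x => f x + ∑ i, lamε i * (h x i + ε)) '' D) vε) :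
    |v0 - vε| ≤ ε * max (∑ i, |lam0 i|) (∑ i, |lamε i|) :=
  sensitivity_lemma_general D f h ε hε P hP v0 vε hv0 hvε lam0 lamε hlamε hlagε
end

section
/- Let E = EuclideanSpace ℝ (Fin d), let C ⊆ E be a convex set, and let g : E → ℝ be a convex function that is differentiable with gradient ∇g. Let w* ∈ C, let t > 0, and let w be a function from an open interval around t into E with w(t) ∈ C, differentiable at t with derivative w′(t) = (s − w(t))/t for some s ∈ C satisfying ⟪∇g(w(t)), s⟫ ≤ ⟪∇g(w(t)), w*⟫. Then the function L(τ) = τ·g(w(τ)) is differentiable at t and its derivative satisfies L′(t) ≤ g(w*). -/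
open RealInnerProductSpace

/-! Along a trajectory `w` with `w′(t) = (s − w(t))/t`, the chain rule gives
`(τ · g(w τ))′(t) = g(w t) + ⟪∇g(w t), s − w t⟫`. Since `s` beats `w*` against `∇g(w t)`, this is
at most `g(w t) + ⟪∇g(w t), w* − w t⟫`, which the gradient inequality of the convex function `g`
bounds by `g(w*)`. -/

theorem ConvexOn.add_fderiv_sub_le {E : Type*} [NormedAddCommGroup E] [NormedSpace ℝ E]
    {s : Set E} {f : E → ℝ} {f' : E →L[ℝ] ℝ} {x y : E} (hf : ConvexOn ℝ s f) (hx : x ∈ s)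
    (hy : y ∈ s) (hf' : HasFDerivAt f f' x) :
    f x + f' (y - x) ≤ f y := by
  let ℓ : ℝ →ᵃ[ℝ] E := AffineMap.lineMap x y
  have hline : ConvexOn ℝ (ℓ ⁻¹' s) (f ∘ ℓ) := hf.comp_affineMap ℓ
  have hderiv : HasDerivAt (f ∘ ℓ) (f' (y - x)) 0 := by
    have hf'0 : HasFDerivAt f f' (ℓ 0) := by simpa [ℓ] using hf'
    exact hf'0.comp_hasDerivAt 0 AffineMap.hasDerivAt_lineMap
  have hslope := hline.le_slope_of_hasDerivAt (by simpa [ℓ] using hx) (by simpa [ℓ] using hy)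
    one_pos hderiv
  simp only [slope, Function.comp_apply, ℓ, AffineMap.lineMap_apply_zero,
    AffineMap.lineMap_apply_one, sub_zero, inv_one, one_smul, vsub_eq_sub] at hslope
  linarith

theorem ConvexOn.add_inner_sub_le_of_hasGradientAt {E : Type*} [NormedAddCommGroup E]
    [InnerProductSpace ℝ E] [CompleteSpace E] {s : Set E} {f : E → ℝ} {G x y : E}
    (hf : ConvexOn ℝ s f) (hx : x ∈ s) (hy : y ∈ s) (hG : HasGradientAt f G x) :
    f x + ⟪G, y - x⟫ ≤ f y :=
  hf.add_fderiv_sub_le hx hy (hasGradientAt_iff_hasFDerivAt.mp hG)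

theorem lyapunov_drift_general
    {d : ℕ}
    (g : EuclideanSpace ℝ (Fin d) → ℝ) (hg : ConvexOn ℝ Set.univ g)
    (g' : EuclideanSpace ℝ (Fin d) → EuclideanSpace ℝ (Fin d))
    (hg' : ∀ x, HasGradientAt g (g' x) x)
    (wstar : EuclideanSpace ℝ (Fin d))
    (t : ℝ) (ht : 0 < t)
    (w : ℝ → EuclideanSpace ℝ (Fin d))
    (s : EuclideanSpace ℝ (Fin d))
    (hw' : HasDerivAt w (t⁻¹ • (s - w t)) t)
    (hopt : ⟪g' (w t), s⟫ ≤ ⟪g' (w t), wstar⟫) :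
    ∃ L' : ℝ, HasDerivAt (fun τ => τ * g (w τ)) L' t ∧ L' ≤ g wstar := by
  have hgw : HasDerivAt (fun τ => g (w τ)) ⟪g' (w t), t⁻¹ • (s - w t)⟫ t :=
    (hasGradientAt_iff_hasFDerivAt.mp (hg' (w t))).comp_hasDerivAt t hw'
  refine ⟨_, (hasDerivAt_id t).mul hgw, ?_⟩
  have hconvex := hg.add_inner_sub_le_of_hasGradientAt (Set.mem_univ _) (Set.mem_univ wstar)
    (hg' (w t))
  calc 1 * g (w t) + t * ⟪g' (w t), t⁻¹ • (s - w t)⟫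
      = g (w t) + ⟪g' (w t), s - w t⟫ := by
        rw [real_inner_smul_right, mul_inv_cancel_left₀ ht.ne', one_mul]
    _ ≤ g (w t) + ⟪g' (w t), wstar - w t⟫ := by
        rw [inner_sub_right, inner_sub_right]; linarith
    _ ≤ g wstar := hconvex

/-- Lyapunov drift computation from the proof of Lemma 7 of the paper: along a
trajectory `w` with `w′(t) = (s − w(t))/t` where `s ∈ C` minimizes the inner product
with the gradient `∇g(w(t))` at least as well as `w* ∈ C`, the Lyapunov function
`L(τ) = τ·g(w(τ))` is differentiable at `t` with `L′(t) ≤ g(w*)`. -/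
theorem lyapunov_drift
    {d : ℕ} (C : Set (EuclideanSpace ℝ (Fin d))) (hC : Convex ℝ C)
    (g : EuclideanSpace ℝ (Fin d) → ℝ) (hg : ConvexOn ℝ Set.univ g)
    (g' : EuclideanSpace ℝ (Fin d) → EuclideanSpace ℝ (Fin d))
    (hg' : ∀ x, HasGradientAt g (g' x) x)
    (wstar : EuclideanSpace ℝ (Fin d)) (hwstar : wstar ∈ C)
    (t : ℝ) (ht : 0 < t)
    (w : ℝ → EuclideanSpace ℝ (Fin d)) (hwC : w t ∈ C)
    (s : EuclideanSpace ℝ (Fin d)) (hs : s ∈ C)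
    (hw' : HasDerivAt w (t⁻¹ • (s - w t)) t)
    (hopt : ⟪g' (w t), s⟫ ≤ ⟪g' (w t), wstar⟫) :
    ∃ L' : ℝ, HasDerivAt (fun τ => τ * g (w τ)) L' t ∧ L' ≤ g wstar :=
  lyapunov_drift_general g hg g' hg' wstar t ht w s hw' hopt
end

section
/- Let E be a real vector space, F ⊆ E a set, f, q : E → ℝ with q(w) ≥ 0 for all w ∈ F, and let α > 1, β > 0, ε > 0 be real numbers. Assume: (i) f(w) ≥ f_min for all w ∈ F for some real f_min; (ii) there exists w₀ ∈ F with q(w₀) = 0; (iii) w_p ∈ F minimizes the penalized objective w ↦ f(w) + (β/α)·q(w)^α over F; and (iv) β ≥ α·(f(w₀) − f_min)·(2/ε)^α. Then q(w_p) ≤ ε/2. -/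
/-! Comparing the minimizer `wp` with the penalty-free point `w₀` bounds its penalty by the
optimality gap: `(β/α) q(wp)^α ≤ f(w₀) - fmin`, and the choice of `β` makes this gap at most
`(β/α) (ε/2)^α`. -/

theorem penalty_le_sub_of_forall_add_le_add {E : Type*} {F : Set E} {f P : E → ℝ} {fmin : ℝ}
    {w₀ wp : E} (hfmin : ∀ w ∈ F, fmin ≤ f w) (hw₀ : w₀ ∈ F) (hP₀ : P w₀ = 0) (hwp : wp ∈ F)
    (hmin : ∀ w ∈ F, f wp + P wp ≤ f w + P w) :
    P wp ≤ f w₀ - fmin := by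
  linarith [hmin w₀ hw₀, hfmin wp hwp]

theorem Real.le_of_rpow_le_rpow {a b z : ℝ} (ha : 0 ≤ a) (hz : 0 < z) (h : b ^ z ≤ a ^ z) :
    b ≤ a :=
  le_of_not_gt fun hab => (Real.rpow_lt_rpow ha hab hz).not_ge h

theorem penalty_small_at_penalized_min_general
    {E : Type*}
    (F : Set E) (f q : E → ℝ)
    (α β ε fmin : ℝ) (hα : 1 < α) (hβ : 0 < β) (hε : 0 < ε)
    (hfmin : ∀ w ∈ F, fmin ≤ f w)
    (w₀ : E) (hw₀ : w₀ ∈ F) (hq₀ : q w₀ = 0)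
    (wp : E) (hwp : wp ∈ F)
    (hmin : ∀ w ∈ F, f wp + (β / α) * q wp ^ α ≤ f w + (β / α) * q w ^ α)
    (hβbig : α * (f w₀ - fmin) * (2 / ε) ^ α ≤ β) :
    q wp ≤ ε / 2 := by
  have hα₀ : 0 < α := by linarith
  have hpen : β / α * q wp ^ α ≤ f w₀ - fmin :=
    penalty_le_sub_of_forall_add_le_add (P := fun w => β / α * q w ^ α) hfmin hw₀
      (by simp [hq₀, Real.zero_rpow hα₀.ne']) hwp hmin
  have hgap : f w₀ - fmin ≤ β / α * (ε / 2) ^ α := by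
    have hs : 0 < (ε / 2) ^ α := by positivity
    rw [← inv_div, Real.inv_rpow (by positivity)] at hβbig
    rw [div_mul_eq_mul_div, le_div_iff₀ hα₀]
    calc (f w₀ - fmin) * α = α * (f w₀ - fmin) * ((ε / 2) ^ α)⁻¹ * (ε / 2) ^ α := by
          field_simp
      _ ≤ β * (ε / 2) ^ α := by gcongr
  have hrpow : q wp ^ α ≤ (ε / 2) ^ α :=
    le_of_mul_le_mul_left (hpen.trans hgap) (by positivity)
  exact Real.le_of_rpow_le_rpow (by positivity) hα₀ hrpow

/-- Lemma 8 of the paper (lem_opt1): for a sufficiently large penalty parameter `β`,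
any minimizer of the penalized objective `f + (β/α)·qᵅ` over `F` has penalty level
`q(w_p) ≤ ε/2`. -/
theorem penalty_small_at_penalized_min
    {E : Type*} [AddCommGroup E] [Module ℝ E]
    (F : Set E) (f q : E → ℝ) (hq : ∀ w ∈ F, 0 ≤ q w)
    (α β ε fmin : ℝ) (hα : 1 < α) (hβ : 0 < β) (hε : 0 < ε)
    (hfmin : ∀ w ∈ F, fmin ≤ f w)
    (w₀ : E) (hw₀ : w₀ ∈ F) (hq₀ : q w₀ = 0)
    (wp : E) (hwp : wp ∈ F)
    (hmin : ∀ w ∈ F, f wp + (β / α) * q wp ^ α ≤ f w + (β / α) * q w ^ α)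
    (hβbig : α * (f w₀ - fmin) * (2 / ε) ^ α ≤ β) :
    q wp ≤ ε / 2 :=
  penalty_small_at_penalized_min_general F f q α β ε fmin hα hβ hε hfmin w₀ hw₀ hq₀ wp hwp hmin
    hβbig
end

section
/- Let E = EuclideanSpace ℝ (Fin d), C ⊆ E a convex set, f, p : E → ℝ functions with p(w) ≥ 0 for all w ∈ C, β > 0, and let g = f + β·p be convex and differentiable with gradient ∇g. Let w* ∈ C satisfy g(w*) ≤ g(v) for all v ∈ C, and let w₀ ∈ C satisfy p(w₀) = 0. Let w : (0,∞) → E be a trajectory with w(t) ∈ C for all t > 0, differentiable at every t > 0 with derivative w′(t) = (s(t) − w(t))/t, where s(t) ∈ C and ⟪∇g(w(t)), s(t)⟫ ≤ ⟪∇g(w(t)), v⟫ for all v ∈ C, and with t·g(w(t)) → 0 as t → 0⁺. Then f(w(t)) ≤ f(w₀) for all t > 0; in particular the cost along the trajectory never exceeds the optimal value of f over {w ∈ C : p(w) = 0}. -/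
open RealInnerProductSpace Filter Set Topology

/-! Fix a comparison point `v`. Along the trajectory, `V t = t * (g (w t) - g v)` has derivative
`g (w t) - g v + ⟪∇g (w t), s t - w t⟫`, which is nonpositive: `s t` minimises the linear form
`⟪∇g (w t), ·⟫`, and the first-order convexity inequality gives `⟪∇g (w t), v - w t⟫ ≤ g v - g (w t)`.
So `V` is antitone on `(0, ∞)` and tends to `0` at `0⁺`, whence `g (w t) ≤ g v`. Taking `v = w₀`,
where the penalty vanishes, and using `p ≥ 0` on `C` gives `f (w t) ≤ g (w t) ≤ g w₀ = f w₀`. -/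

theorem ConvexOn.apply_sub_le_of_hasFDerivAt {E : Type*} [NormedAddCommGroup E] [NormedSpace ℝ E]
    {S : Set E} {g : E → ℝ} {g' : E →L[ℝ] ℝ} {x y : E}
    (hg : ConvexOn ℝ S g) (hx : x ∈ S) (hy : y ∈ S) (h : HasFDerivAt g g' x) :
    g' (y - x) ≤ g y - g x := by
  let ℓ : ℝ →ᵃ[ℝ] E := AffineMap.lineMap x y
  have hℓ : HasDerivAt (g ∘ ℓ) (g' (y - x)) 0 := by
    have h0 : ℓ 0 = x := AffineMap.lineMap_apply_zero x y
    exact (h0 ▸ h).comp_hasDerivAt _ AffineMap.hasDerivAt_lineMap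
  simpa [slope_def_field, ℓ] using
    (hg.comp_affineMap ℓ).le_slope_of_hasDerivAt (by simpa [ℓ]) (by simpa [ℓ]) one_pos hℓ

theorem AntitoneOn.le_of_tendsto_nhdsGT {α β : Type*} [LinearOrder α] [TopologicalSpace α]
    [OrderTopology α] [DenselyOrdered α] [Preorder β] [TopologicalSpace β] [ClosedIciTopology β]
    {f : α → β} {a b : α} {l : β}
    (hf : AntitoneOn f (Ioi a)) (hl : Tendsto f (𝓝[>] a) (𝓝 l)) (hab : a < b) : f b ≤ l := by
  have : (𝓝[>] a).NeBot := nhdsGT_neBot_of_exists_gt ⟨b, hab⟩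
  refine ge_of_tendsto hl ?_
  filter_upwards [Ioo_mem_nhdsGT hab] with τ hτ
  exact hf hτ.1 hab hτ.2.le

variable {E : Type*} [NormedAddCommGroup E] [InnerProductSpace ℝ E] [CompleteSpace E]

theorem ConvexOn.inner_gradient_sub_le {S : Set E} {g : E → ℝ} {G x y : E}
    (hg : ConvexOn ℝ S g) (hx : x ∈ S) (hy : y ∈ S) (h : HasGradientAt g G x) :
    ⟪G, y - x⟫ ≤ g y - g x := by
  simpa using hg.apply_sub_le_of_hasFDerivAt hx hy h.hasFDerivAt

theorem HasGradientAt.hasDerivAt_mul_comp_sub {g : E → ℝ} {w : ℝ → E} {G s : E} {t : ℝ}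
    (hg : HasGradientAt g G (w t)) (hw : HasDerivAt w (t⁻¹ • (s - w t)) t) (ht : t ≠ 0) (c : ℝ) :
    HasDerivAt (fun τ ↦ τ * (g (w τ) - c)) (g (w t) - c + ⟪G, s - w t⟫) t := by
  have hgw : HasDerivAt (fun τ ↦ g (w τ) - c) (t⁻¹ * ⟪G, s - w t⟫) t := by
    simpa [inner_smul_right] using (hg.hasFDerivAt.comp_hasDerivAt t hw).sub_const c
  simpa only [one_mul, mul_inv_cancel_left₀ ht] using (hasDerivAt_id' t).fun_mul hgw

theorem ConvexOn.trajectory_le {S : Set E} {g : E → ℝ} {G w s : ℝ → E} {v : E} {t : ℝ}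
    (hg : ConvexOn ℝ S g) (hwS : ∀ t > 0, w t ∈ S) (hv : v ∈ S)
    (hG : ∀ t > 0, HasGradientAt g (G t) (w t))
    (hw : ∀ t > 0, HasDerivAt w (t⁻¹ • (s t - w t)) t)
    (hs : ∀ t > 0, ⟪G t, s t⟫ ≤ ⟪G t, v⟫)
    (hzero : Tendsto (fun t ↦ t * g (w t)) (𝓝[>] 0) (𝓝 0)) (ht : 0 < t) :
    g (w t) ≤ g v := by
  set V : ℝ → ℝ := fun τ ↦ τ * (g (w τ) - g v)
  have hV : ∀ τ > 0, HasDerivAt V (g (w τ) - g v + ⟪G τ, s τ - w τ⟫) τ := fun τ hτ ↦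
    (hG τ hτ).hasDerivAt_mul_comp_sub (hw τ hτ) hτ.ne' (g v)
  have hV' : ∀ τ > 0, g (w τ) - g v + ⟪G τ, s τ - w τ⟫ ≤ 0 := by
    intro τ hτ
    have := hg.inner_gradient_sub_le (hwS τ hτ) hv (hG τ hτ)
    rw [inner_sub_right] at this ⊢
    linarith [hs τ hτ]
  have hanti : AntitoneOn V (Ioi 0) :=
    antitoneOn_of_hasDerivWithinAt_nonpos (convex_Ioi 0)
      (fun τ hτ ↦ (hV τ hτ).continuousAt.continuousWithinAt)
      (fun τ hτ ↦ (hV τ (interior_subset hτ)).hasDerivWithinAt)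
      (fun τ hτ ↦ hV' τ (interior_subset hτ))
  have hlim : Tendsto V (𝓝[>] 0) (𝓝 0) := by
    have : Tendsto (fun τ : ℝ ↦ τ * g v) (𝓝[>] 0) (𝓝 0) :=
      ((continuous_mul_const (g v)).tendsto' 0 0 (zero_mul _)).mono_left nhdsWithin_le_nhds
    simpa [V, mul_sub] using hzero.sub this
  exact sub_nonpos.mp (nonpos_of_mul_nonpos_right (hanti.le_of_tendsto_nhdsGT hlim ht) ht)

theorem trajectory_cost_optimal_general
    {d : ℕ} (C : Set (EuclideanSpace ℝ (Fin d)))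
    (f p g : EuclideanSpace ℝ (Fin d) → ℝ)
    (hp : ∀ w ∈ C, 0 ≤ p w) (β : ℝ) (hβ : 0 < β)
    (hgdef : ∀ w, g w = f w + β * p w)
    (hg : ConvexOn ℝ Set.univ g)
    (g' : EuclideanSpace ℝ (Fin d) → EuclideanSpace ℝ (Fin d))
    (hg' : ∀ x, HasGradientAt g (g' x) x)
    (w₀ : EuclideanSpace ℝ (Fin d)) (hw₀ : w₀ ∈ C) (hp₀ : p w₀ = 0)
    (w s : ℝ → EuclideanSpace ℝ (Fin d))
    (hwC : ∀ t > (0 : ℝ), w t ∈ C)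
    (hw' : ∀ t > (0 : ℝ), HasDerivAt w (t⁻¹ • (s t - w t)) t)
    (hopt : ∀ t > (0 : ℝ), ∀ v ∈ C, ⟪g' (w t), s t⟫ ≤ ⟪g' (w t), v⟫)
    (hzero : Tendsto (fun t => t * g (w t)) (nhdsWithin 0 (Set.Ioi 0)) (nhds 0)) :
    ∀ t > (0 : ℝ), f (w t) ≤ f w₀ := by
  intro t ht
  calc f (w t) ≤ g (w t) := by
        rw [hgdef]
        exact le_add_of_nonneg_right (mul_nonneg hβ.le (hp (w t) (hwC t ht)))
    _ ≤ g w₀ := hg.trajectory_le (fun t _ ↦ mem_univ (w t)) (mem_univ w₀) (fun t _ ↦ hg' (w t))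
        hw' (fun t ht ↦ hopt t ht w₀ hw₀) hzero ht
    _ = f w₀ := by simp [hgdef, hp₀]

/-- Deterministic (fluid-limit) content of Theorem 1 of the paper (optimal cost):
along a greedy primal–dual trajectory for the penalized objective `g = f + β·p`,
the cost `f` never exceeds the value of `f` at any point `w₀ ∈ C` where the
(nonnegative) penalty vanishes. -/
theorem trajectory_cost_optimal
    {d : ℕ} (C : Set (EuclideanSpace ℝ (Fin d))) (hC : Convex ℝ C)
    (f p g : EuclideanSpace ℝ (Fin d) → ℝ)
    (hp : ∀ w ∈ C, 0 ≤ p w) (β : ℝ) (hβ : 0 < β)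
    (hgdef : ∀ w, g w = f w + β * p w)
    (hg : ConvexOn ℝ Set.univ g)
    (g' : EuclideanSpace ℝ (Fin d) → EuclideanSpace ℝ (Fin d))
    (hg' : ∀ x, HasGradientAt g (g' x) x)
    (wstar : EuclideanSpace ℝ (Fin d)) (hwstar : wstar ∈ C)
    (hmin : ∀ v ∈ C, g wstar ≤ g v)
    (w₀ : EuclideanSpace ℝ (Fin d)) (hw₀ : w₀ ∈ C) (hp₀ : p w₀ = 0)
    (w s : ℝ → EuclideanSpace ℝ (Fin d))
    (hwC : ∀ t > (0 : ℝ), w t ∈ C)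
    (hsC : ∀ t > (0 : ℝ), s t ∈ C)
    (hw' : ∀ t > (0 : ℝ), HasDerivAt w (t⁻¹ • (s t - w t)) t)
    (hopt : ∀ t > (0 : ℝ), ∀ v ∈ C, ⟪g' (w t), s t⟫ ≤ ⟪g' (w t), v⟫)
    (hzero : Tendsto (fun t => t * g (w t)) (nhdsWithin 0 (Set.Ioi 0)) (nhds 0)) :
    ∀ t > (0 : ℝ), f (w t) ≤ f w₀ :=
  trajectory_cost_optimal_general C f p g hp β hβ hgdef hg g' hg' w₀ hw₀ hp₀ w s hwC hw' hopt hzero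
end

section
/- Let D ⊆ ℝᵈ be a set, h : ℝᵈ → ℝᵐ a function, f : ℝᵈ → ℝ, and let α > 1, β > 0, 0 < ε ≤ z_max, and f_min be real numbers. Define the feasible set F = {(x, z) ∈ ℝᵈ × ℝᵐ : x ∈ D and ε ≤ zᵢ ≤ z_max for all i}. Assume: (i) f(x) ≥ f_min for all (x, z) ∈ F; (ii) there exists (x₀, z₀) ∈ F with h(x₀) + z₀ = 0; (iii) (x_p, z_p) ∈ F minimizes the penalized objective (x, z) ↦ f(x) + (β/α)·‖h(x) + z‖^α over F, where ‖·‖ is the Euclidean norm; and (iv) β ≥ α·(f(x₀) − f_min)·(2/ε)^α. Then h(x_p)ᵢ ≤ −ε/2 ≤ 0 for every coordinate i; that is, the minimizer of the penalized problem strictly satisfies all the inequality constraints h(x) ⪯ 0 of the original problem. -/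
/-! Comparing the penalized objective at the minimizer `(x_p, z_p)` with its value at the
exactly feasible point `(x₀, z₀)` bounds the penalty `(β/α)‖h(x_p) + z_p‖^α` by `f(x₀) - f_min`;
for `β` as large as assumed this forces `‖h(x_p) + z_p‖ ≤ ε/2`. Since every coordinate of
`z_p` is at least `ε`, each `h(x_p)ᵢ = (h(x_p) + z_p)ᵢ - (z_p)ᵢ` is at most `ε/2 - ε`. -/

theorem le_of_div_mul_rpow_le {α β r N Δ : ℝ} (hα : 0 < α) (hβ : 0 < β) (hr : 0 < r)
    (hpen : β / α * N ^ α ≤ Δ) (hβbig : α * Δ * r⁻¹ ^ α ≤ β) : N ≤ r := by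
  by_contra! hrN
  have hpow : r ^ α < N ^ α := Real.rpow_lt_rpow hr.le hrN hα
  have hΔ : α * Δ ≤ β * r ^ α :=
    calc α * Δ = α * Δ * r⁻¹ ^ α * r ^ α := by
          rw [Real.inv_rpow hr.le, mul_assoc, inv_mul_cancel₀ (by positivity), mul_one]
      _ ≤ β * r ^ α := by gcongr
  rw [div_mul_eq_mul_div, div_le_iff₀ hα] at hpen
  linarith [mul_lt_mul_of_pos_left hpow hβ]

theorem norm_le_of_isMinOn_penalized {X E : Type*} [SeminormedAddCommGroup E] {S : Set X}
    {φ : X → ℝ} {g : X → E} {α β r fmin : ℝ} {p p₀ : X} (hα : 0 < α) (hβ : 0 < β) (hr : 0 < r)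
    (hmin : IsMinOn (fun x ↦ φ x + β / α * ‖g x‖ ^ α) S p) (hfmin : fmin ≤ φ p)
    (hp₀ : p₀ ∈ S) (hg₀ : g p₀ = 0) (hβbig : α * (φ p₀ - fmin) * r⁻¹ ^ α ≤ β) :
    ‖g p‖ ≤ r := by
  have hcompare := isMinOn_iff.mp hmin p₀ hp₀
  simp only [hg₀, norm_zero, Real.zero_rpow hα.ne', mul_zero, add_zero] at hcompare
  exact le_of_div_mul_rpow_le hα hβ hr (by linarith) hβbig

theorem penalized_min_feasible_general
    {d m : ℕ} (D : Set (Fin d → ℝ))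
    (h : (Fin d → ℝ) → EuclideanSpace ℝ (Fin m))
    (f : (Fin d → ℝ) → ℝ)
    (α β ε zmax fmin : ℝ)
    (hα : 1 < α) (hβ : 0 < β) (hε : 0 < ε)
    (F : Set ((Fin d → ℝ) × EuclideanSpace ℝ (Fin m)))
    (hF : F = {q | q.1 ∈ D ∧ ∀ i, ε ≤ q.2 i ∧ q.2 i ≤ zmax})
    (hfmin : ∀ q ∈ F, fmin ≤ f q.1)
    (x₀ : Fin d → ℝ) (z₀ : EuclideanSpace ℝ (Fin m))
    (h₀ : (x₀, z₀) ∈ F) (hfeas : h x₀ + z₀ = 0)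
    (xp : Fin d → ℝ) (zp : EuclideanSpace ℝ (Fin m))
    (hp : (xp, zp) ∈ F)
    (hmin : ∀ q ∈ F, f xp + (β / α) * ‖h xp + zp‖ ^ α ≤
      f q.1 + (β / α) * ‖h q.1 + q.2‖ ^ α)
    (hβbig : α * (f x₀ - fmin) * (2 / ε) ^ α ≤ β) :
    ∀ i, h xp i ≤ -(ε / 2) ∧ -(ε / 2) ≤ (0 : ℝ) := by
  have hsmall : ‖h xp + zp‖ ≤ ε / 2 :=
    norm_le_of_isMinOn_penalized (S := F) (φ := fun q ↦ f q.1) (g := fun q ↦ h q.1 + q.2)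
      (p := (xp, zp)) (p₀ := (x₀, z₀)) (by linarith) hβ (by positivity) (isMinOn_iff.mpr hmin)
      (hfmin _ hp) h₀ hfeas (by rwa [inv_div])
  intro i
  have hzp : ε ≤ zp i := by
    rw [hF] at hp
    exact (hp.2 i).1
  have hcoord : (h xp + zp) i ≤ ‖h xp + zp‖ :=
    (Real.le_norm_self _).trans (PiLp.norm_apply_le (h xp + zp) i)
  rw [PiLp.add_apply] at hcoord
  constructor <;> linarith

/-- Deterministic content of Theorem 2 of the paper (feasibility): for sufficiently
large penalty parameter `β`, any minimizer of the penalized problem PEN (with penalty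
`(β/α)·‖h(x)+z‖ᵅ` and auxiliary variable `z` in the box `[ε, z_max]ᵐ`) strictly
satisfies all original constraints: `h(x_p)ᵢ ≤ −ε/2 ≤ 0` for every `i`. -/
theorem penalized_min_feasible
    {d m : ℕ} (D : Set (Fin d → ℝ))
    (h : (Fin d → ℝ) → EuclideanSpace ℝ (Fin m))
    (f : (Fin d → ℝ) → ℝ)
    (α β ε zmax fmin : ℝ)
    (hα : 1 < α) (hβ : 0 < β) (hε : 0 < ε) (hεz : ε ≤ zmax)
    (F : Set ((Fin d → ℝ) × EuclideanSpace ℝ (Fin m)))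
    (hF : F = {q | q.1 ∈ D ∧ ∀ i, ε ≤ q.2 i ∧ q.2 i ≤ zmax})
    (hfmin : ∀ q ∈ F, fmin ≤ f q.1)
    (x₀ : Fin d → ℝ) (z₀ : EuclideanSpace ℝ (Fin m))
    (h₀ : (x₀, z₀) ∈ F) (hfeas : h x₀ + z₀ = 0)
    (xp : Fin d → ℝ) (zp : EuclideanSpace ℝ (Fin m))
    (hp : (xp, zp) ∈ F)
    (hmin : ∀ q ∈ F, f xp + (β / α) * ‖h xp + zp‖ ^ α ≤
      f q.1 + (β / α) * ‖h q.1 + q.2‖ ^ α)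
    (hβbig : α * (f x₀ - fmin) * (2 / ε) ^ α ≤ β) :
    ∀ i, h xp i ≤ -(ε / 2) ∧ -(ε / 2) ≤ (0 : ℝ) :=
  penalized_min_feasible_general D h f α β ε zmax fmin hα hβ hε F hF hfmin x₀ z₀ h₀ hfeas xp zp hp
    hmin hβbig
end
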